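/- Let G be a finite simple graph, g,f:V(G)→ℤ⁺ with g(x)≤f(x) for all x, and H a subgraph of G with d_G(x) ≥ f(x)+d_H(x) for all x and g(x)·(d_G(y)−d_H(y)) ≥ d_G(x)·f(y) for all x,y. Then for every nonempty S⊆V(G) and T={x∈V(G)∖S : d_{G−S}(x)−d_H(x)+e_H(x,S)<f(x)}, the inequality g(S)+∑_{x∈T} d_{G−S}(x)−f(T) ≥ ∑_{x∈T} d_H(x)−e_H(S,T) holds. -/

import Mathlib

open Finset

/-- `h` is an indicator function of a fractional `r`-factor of `G`:
a symmetric edge-weighting with values in `[0,1]`, supported on edges of `G`,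
whose weighted degree at each vertex `x` equals `r x`. -/
def IsFracFactor {V : Type*} [Fintype V] (G : SimpleGraph V) (r : V → ℕ)
    (h : V → V → ℝ) : Prop :=
  (∀ x y, h x y = h y x) ∧ (∀ x y, 0 ≤ h x y ∧ h x y ≤ 1) ∧
  (∀ x y, ¬ G.Adj x y → h x y = 0) ∧ ∀ x : V, ∑ y : V, h x y = (r x : ℝ)

/-- `G` has a fractional `r`-factor. -/
def HasFracFactor {V : Type*} [Fintype V] (G : SimpleGraph V) (r : V → ℕ) : Prop :=
  ∃ h, IsFracFactor G r h

/-- `G` has all fractional `(g,f)`-factors excluding `H`: for every integer-valued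
`r` with `g ≤ r ≤ f` pointwise, `G - E(H)` has a fractional `r`-factor. -/
def HasAllFracExcl {V : Type*} [Fintype V] (G H : SimpleGraph V) (g f : V → ℕ) : Prop :=
  ∀ r : V → ℕ, (∀ x, g x ≤ r x ∧ r x ≤ f x) → HasFracFactor (G \ H) r

/-- `G` has all fractional `(g,f)`-factors. -/
def HasAllFrac {V : Type*} [Fintype V] (G : SimpleGraph V) (g f : V → ℕ) : Prop :=
  ∀ r : V → ℕ, (∀ x, g x ≤ r x ∧ r x ≤ f x) → HasFracFactor G r

/-- Degree of `x` in the induced subgraph `G - S`. -/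
def degOut {V : Type*} [Fintype V] [DecidableEq V] (G : SimpleGraph V)
    [DecidableRel G.Adj] (S : Finset V) (x : V) : ℕ :=
  (Sᶜ.filter fun y => G.Adj x y).card

/-- Number of edges of `G` with one end in `S` and the other in `T`
(for disjoint `S`, `T`). -/
def eBtw {V : Type*} [Fintype V] [DecidableEq V] (G : SimpleGraph V)
    [DecidableRel G.Adj] (S T : Finset V) : ℕ :=
  ∑ x ∈ S, (T.filter fun y => G.Adj x y).card

/-!
Put `b = ∑_{x ∈ T} (d_G(x) - d_H(x))` and `c = e_G(T,S) - e_H(T,S)`. Splitting `d_G(x)` into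
`d_{G-S}(x)` and the neighbours in `S`, the claim becomes `c ≤ g(S) + (b - f(T))`. Counting edges
gives `c ≤ b` and `c ≤ ∑_{x ∈ S} d_G(x)`; summing the hypotheses gives `f(T) ≤ b` and
`(∑_{x ∈ S} d_G(x)) f(T) ≤ g(S) b`. If `f(T) ≤ g(S)`, the bound `c ≤ b` suffices; otherwise
`f(T) > 0`, and `c f(T) ≤ g(S) b ≤ (g(S) + b - f(T)) f(T)` because `(f(T) - g(S))(b - f(T)) ≥ 0`.
-/

section
variable {V : Type*} [Fintype V] [DecidableEq V] (G : SimpleGraph V) [DecidableRel G.Adj]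

theorem degOut_add_card_filter_adj (S : Finset V) (x : V) :
    degOut G S x + #{y ∈ S | G.Adj x y} = G.degree x := by
  rw [degOut, ← card_union_of_disjoint (disjoint_filter_filter disjoint_compl_left),
    ← filter_union, union_comm, union_compl, ← G.neighborFinset_eq_filter,
    G.card_neighborFinset_eq_degree]

theorem degOut_mono {H : SimpleGraph V} [DecidableRel H.Adj] (hHG : H ≤ G) (S : Finset V)
    (x : V) : degOut H S x ≤ degOut G S x :=
  card_le_card fun y hy => by
    simp only [mem_filter] at hy ⊢
    exact ⟨hy.1, hHG hy.2⟩

theorem card_filter_adj_sub_le {H : SimpleGraph V} [DecidableRel H.Adj] (hHG : H ≤ G)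
    (S : Finset V) (x : V) :
    (#{y ∈ S | G.Adj x y} : ℤ) - #{y ∈ S | H.Adj x y} ≤ (G.degree x : ℤ) - H.degree x := by
  have hG := degOut_add_card_filter_adj G S x
  have hH := degOut_add_card_filter_adj H S x
  have := degOut_mono G hHG S x
  omega

theorem eBtw_sub_eBtw_le {H : SimpleGraph V} [DecidableRel H.Adj] (hHG : H ≤ G)
    (S T : Finset V) :
    (eBtw G S T : ℤ) - eBtw H S T ≤ ∑ x ∈ S, ((G.degree x : ℤ) - H.degree x) := by
  simp only [eBtw, Nat.cast_sum, ← sum_sub_distrib]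
  exact sum_le_sum fun x _ => card_filter_adj_sub_le G hHG T x

theorem eBtw_comm (S T : Finset V) : eBtw G S T = eBtw G T S := by
  simp only [eBtw, card_filter]
  rw [sum_comm]
  simp only [G.adj_comm]

theorem eBtw_le_sum_degree (S T : Finset V) : eBtw G S T ≤ ∑ x ∈ S, G.degree x :=
  sum_le_sum fun x _ => (card_le_card fun y hy => by simpa using (mem_filter.1 hy).2).trans_eq
    (G.card_neighborFinset_eq_degree x)

theorem sum_degOut_eq (S T : Finset V) :
    ∑ x ∈ T, (degOut G S x : ℤ) = ∑ x ∈ T, (G.degree x : ℤ) - eBtw G T S := by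
  rw [eBtw, Nat.cast_sum, ← sum_sub_distrib]
  refine sum_congr rfl fun x _ => ?_
  have := degOut_add_card_filter_adj G S x
  omega

end

theorem le_add_sub_of_mul_le_mul {R : Type*} [CommRing R] [LinearOrder R]
    [IsStrictOrderedRing R]
    {a b d t x : R} (ha : 0 ≤ a) (htb : t ≤ b) (hxb : x ≤ b) (hxd : x ≤ d)
    (hdt : d * t ≤ a * b) : x ≤ a + (b - t) := by
  rcases le_or_gt t a with hta | hat
  · linarith
  · have ht : 0 < t := ha.trans_lt hat
    refine le_of_mul_le_mul_right ?_ ht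
    nlinarith [mul_nonneg (sub_nonneg.2 hat.le) (sub_nonneg.2 htb),
      mul_le_mul_of_nonneg_right hxd ht.le]

theorem stmt7_general {V : Type*} [Fintype V] [DecidableEq V] (G H : SimpleGraph V)
    [DecidableRel G.Adj] [DecidableRel H.Adj]
    (g f : V → ℕ) (hHG : H ≤ G)
    (hdeg : ∀ x, f x + H.degree x ≤ G.degree x)
    (hprod : ∀ x y, (G.degree x : ℤ) * f y ≤ g x * ((G.degree y : ℤ) - H.degree y)) :
    ∀ S T : Finset V, S.Nonempty →
      T = Sᶜ.filter (fun x =>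
        (degOut G S x : ℤ) - H.degree x + eBtw H {x} S < f x) →
      (∑ x ∈ S, (g x : ℤ)) + ∑ x ∈ T, (degOut G S x : ℤ) - ∑ x ∈ T, (f x : ℤ)
        ≥ ∑ x ∈ T, (H.degree x : ℤ) - eBtw H S T := by
  intro S T _ _
  have hf : ∑ x ∈ T, (f x : ℤ) ≤ ∑ x ∈ T, ((G.degree x : ℤ) - H.degree x) :=
    sum_le_sum fun x _ => by have := hdeg x; omega
  have hS : (eBtw G T S : ℤ) - eBtw H T S ≤ ∑ x ∈ S, (G.degree x : ℤ) := by
    have : (eBtw G T S : ℤ) ≤ ∑ x ∈ S, (G.degree x : ℤ) := by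
      exact_mod_cast eBtw_comm G T S ▸ eBtw_le_sum_degree G S T
    omega
  have hmul : (∑ x ∈ S, (G.degree x : ℤ)) * ∑ x ∈ T, (f x : ℤ)
      ≤ (∑ x ∈ S, (g x : ℤ)) * ∑ x ∈ T, ((G.degree x : ℤ) - H.degree x) := by
    simp only [sum_mul_sum]
    exact sum_le_sum fun x _ => sum_le_sum fun y _ => hprod x y
  have key := le_add_sub_of_mul_le_mul (sum_nonneg fun x _ => Int.natCast_nonneg (g x)) hf
    (eBtw_sub_eBtw_le G hHG T S) hS hmul
  rw [sum_degOut_eq, eBtw_comm H S T]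
  rw [sum_sub_distrib] at key
  linarith

/-- The key inequality in the proof of Theorem 9, for nonempty `S`. -/
theorem stmt7 {V : Type*} [Fintype V] [DecidableEq V] (G H : SimpleGraph V)
    [DecidableRel G.Adj] [DecidableRel H.Adj]
    (g f : V → ℕ) (hg : ∀ x, 1 ≤ g x) (hgf : ∀ x, g x ≤ f x) (hHG : H ≤ G)
    (hdeg : ∀ x, f x + H.degree x ≤ G.degree x)
    (hprod : ∀ x y, (G.degree x : ℤ) * f y ≤ g x * ((G.degree y : ℤ) - H.degree y)) :
    ∀ S T : Finset V, S.Nonempty →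
      T = Sᶜ.filter (fun x =>
        (degOut G S x : ℤ) - H.degree x + eBtw H {x} S < f x) →
      (∑ x ∈ S, (g x : ℤ)) + ∑ x ∈ T, (degOut G S x : ℤ) - ∑ x ∈ T, (f x : ℤ)
        ≥ ∑ x ∈ T, (H.degree x : ℤ) - eBtw H S T :=
  stmt7_general G H g f hHG hdeg hprod
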